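/- arXiv:1903.12232 — 5 statements merged into one kernel-verified Lean document; each statement's English description precedes it below -/
import Mathlib

section
/- Let ξ > 0 and set α = ξ. With J(y,z) the 2×2 matrix with rows (0, ξ⁻¹ e^{ξy+z}) and (−ξ⁻¹ e^{ξy+z}, 0), and H(y,z) = −ξ e^{−ξy}(y − z + 1 − e^{−z}) + 1 − e^{−ξy}, one has for all (y,z) ∈ ℝ²: ξ⁻¹ e^{ξy+z} · ∂H/∂z(y,z) = e^z − 1 and −ξ⁻¹ e^{ξy+z} · ∂H/∂y(y,z) = ξ + e^z(ξz − ξy − ξ). In other words, at α = ξ the reduced vector field (e^z − 1, ξ + e^z(αz − ξy − ξ)) equals J(y,z)∇H(y,z), so the reduced problem is Hamiltonian. -/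
open Real

noncomputable def ruinaHamiltonian (ξ y z : ℝ) : ℝ :=
  -ξ * exp (-ξ * y) * (y - z + 1 - exp (-z)) + 1 - exp (-ξ * y)

theorem hasDerivAt_ruinaHamiltonian_right (ξ y z : ℝ) :
    HasDerivAt (ruinaHamiltonian ξ y) (ξ * exp (-ξ * y) * (1 - exp (-z))) z := by
  have hexp : HasDerivAt (fun z' => exp (-z')) (-exp (-z)) z := by
    simpa using (hasDerivAt_neg z).exp
  have hinner : HasDerivAt (fun z' => y - z' + 1 - exp (-z')) (-1 + exp (-z)) z :=
    ((((hasDerivAt_id' z).const_sub y).add_const 1).sub hexp).congr_deriv (by ring)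
  exact (((hinner.const_mul (-ξ * exp (-ξ * y))).add_const 1).sub_const
    (exp (-ξ * y))).congr_deriv (by ring)

theorem hasDerivAt_ruinaHamiltonian_left (ξ y z : ℝ) :
    HasDerivAt (fun y' => ruinaHamiltonian ξ y' z)
      (ξ ^ 2 * exp (-ξ * y) * (y - z + 1 - exp (-z))) y := by
  have hexp : HasDerivAt (fun y' => exp (-ξ * y')) (-ξ * exp (-ξ * y)) y := by
    simpa [mul_comm] using ((hasDerivAt_id y).const_mul (-ξ)).exp
  have hinner : HasDerivAt (fun y' => y' - z + 1 - exp (-z)) 1 y := by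
    simpa using (((hasDerivAt_id y).sub_const z).add_const 1).sub_const (exp (-z))
  exact ((((hexp.const_mul (-ξ)).mul hinner).add_const 1).sub hexp).congr_deriv (by ring)

theorem exp_mul_add_mul_exp_neg_mul (ξ y z : ℝ) :
    exp (ξ * y + z) * exp (-ξ * y) = exp z := by
  rw [← exp_add]
  ring_nf

/-- At `α = ξ` the reduced problem `ẏ = e^z − 1`, `ż = ξ + e^z(αz − ξy − ξ)` is
Hamiltonian: with `H(y,z) = −ξ e^{−ξy}(y − z + 1 − e^{−z}) + 1 − e^{−ξy}`, the vector
field equals `J(y,z)∇H(y,z)` where `J` has rows `(0, ξ⁻¹e^{ξy+z})`, `(−ξ⁻¹e^{ξy+z}, 0)`. -/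
theorem stmt_1 (ξ : ℝ) (hξ : 0 < ξ) (H : ℝ → ℝ → ℝ)
    (hH : ∀ y z : ℝ, H y z =
      -ξ * Real.exp (-ξ * y) * (y - z + 1 - Real.exp (-z)) + 1 - Real.exp (-ξ * y)) :
    ∀ y z : ℝ,
      ξ⁻¹ * Real.exp (ξ * y + z) * deriv (fun z' => H y z') z = Real.exp z - 1 ∧
      -(ξ⁻¹ * Real.exp (ξ * y + z)) * deriv (fun y' => H y' z) y =
        ξ + Real.exp z * (ξ * z - ξ * y - ξ) := by
  intro y z
  obtain rfl : H = ruinaHamiltonian ξ := funext₂ hH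
  rw [(hasDerivAt_ruinaHamiltonian_right ξ y z).deriv,
    (hasDerivAt_ruinaHamiltonian_left ξ y z).deriv]
  have hcancel := exp_mul_add_mul_exp_neg_mul ξ y z
  have hz : exp z * exp (-z) = 1 := by rw [← exp_add, add_neg_cancel, exp_zero]
  constructor
  · calc ξ⁻¹ * exp (ξ * y + z) * (ξ * exp (-ξ * y) * (1 - exp (-z)))
        = ξ⁻¹ * ξ * (exp (ξ * y + z) * exp (-ξ * y)) * (1 - exp (-z)) := by ring
      _ = exp z - 1 := by rw [inv_mul_cancel₀ hξ.ne', hcancel]; linear_combination -hz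
  · calc -(ξ⁻¹ * exp (ξ * y + z)) * (ξ ^ 2 * exp (-ξ * y) * (y - z + 1 - exp (-z)))
        = -(ξ⁻¹ * ξ) * ξ * (exp (ξ * y + z) * exp (-ξ * y)) * (y - z + 1 - exp (-z)) := by
          ring
      _ = ξ + exp z * (ξ * z - ξ * y - ξ) := by
          rw [inv_mul_cancel₀ hξ.ne', hcancel]; linear_combination ξ * hz
end

section
/- Let α > 0, ξ > 0, and let t ↦ (y(t), z(t)) be a differentiable solution on an interval I of the reduced problem ẏ = e^z − 1, ż = ξ + e^z(αz − ξy − ξ). Then for all t ∈ I, d/dt H(y(t), z(t)) = ξ e^{−ξ y(t)} (e^{z(t)} − 1) z(t) (α − ξ). In particular, if α ≥ ξ then t ↦ H(y(t), z(t)) is nondecreasing, since (e^z − 1)z ≥ 0 for all z ∈ ℝ. -/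
/-!
Differentiating `H` along an arbitrary path `(y, z)` with velocity `(y', z')` gives
`ξ e^{-ξy} (ξ y' (y - z + 1 - e^{-z}) + z' (1 - e^{-z}))`. On the reduced vector field both
summands carry the factor `e^z - 1`, since `z' (1 - e^{-z}) = (e^z - 1)(ξ e^{-z} + αz - ξy - ξ)`,
and everything except `(α - ξ) z` cancels. Monotonicity then follows from the sign of the
derivative, as `e^w - 1` and `w` have the same sign.
-/

open Real

theorem Real.exp_sub_one_mul_self_nonneg (w : ℝ) : 0 ≤ (exp w - 1) * w := by
  rcases le_total 0 w with hw | hw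
  · exact mul_nonneg (sub_nonneg.2 (one_le_exp hw)) hw
  · exact mul_nonneg_of_nonpos_of_nonpos (sub_nonpos.2 (exp_le_one_iff.2 hw)) hw

theorem monotoneOn_of_hasDerivAt_nonneg {D : Set ℝ} (hD : Convex ℝ D) {f f' : ℝ → ℝ}
    (hf : ∀ x ∈ D, HasDerivAt f (f' x) x) (hf'₀ : ∀ x ∈ D, 0 ≤ f' x) : MonotoneOn f D :=
  monotoneOn_of_hasDerivWithinAt_nonneg hD
    (fun x hx => (hf x hx).continuousAt.continuousWithinAt)
    (fun x hx => (hf x (interior_subset hx)).hasDerivWithinAt)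
    (fun x hx => hf'₀ x (interior_subset hx))

namespace RuinaReduced

noncomputable def lyapunov (ξ y z : ℝ) : ℝ :=
  -ξ * exp (-ξ * y) * (y - z + 1 - exp (-z)) + 1 - exp (-ξ * y)

theorem hasDerivAt_lyapunov_comp {ξ y' z' t : ℝ} {y z : ℝ → ℝ}
    (hy : HasDerivAt y y' t) (hz : HasDerivAt z z' t) :
    HasDerivAt (fun t => lyapunov ξ (y t) (z t))
      (ξ * exp (-ξ * y t) * (ξ * y' * (y t - z t + 1 - exp (-z t)) + z' * (1 - exp (-z t))))
      t := by
  have hE := (hy.const_mul (-ξ)).exp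
  have hP := ((hy.sub hz).add_const 1).sub hz.neg.exp
  refine ((((hE.const_mul (-ξ)).mul hP).add_const 1).sub hE).congr_deriv ?_
  simp only [Pi.sub_apply, Pi.neg_apply]
  ring

theorem lyapunov_derivative_on_reduced_field (α ξ y z : ℝ) :
    ξ * exp (-ξ * y) * (ξ * (exp z - 1) * (y - z + 1 - exp (-z))
      + (ξ + exp z * (α * z - ξ * y - ξ)) * (1 - exp (-z)))
      = ξ * exp (-ξ * y) * (exp z - 1) * z * (α - ξ) := by
  have hinv : exp (-z) * exp z = 1 := by rw [← exp_add, neg_add_cancel, exp_zero]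
  linear_combination (-(ξ * exp (-ξ * y) * (α * z - ξ * y))) * hinv

end RuinaReduced

open RuinaReduced in
theorem stmt_2_general (α ξ : ℝ) (hξ : 0 < ξ) (H : ℝ → ℝ → ℝ)
    (hH : ∀ y z : ℝ, H y z =
      -ξ * Real.exp (-ξ * y) * (y - z + 1 - Real.exp (-z)) + 1 - Real.exp (-ξ * y))
    (y z : ℝ → ℝ) (s : Set ℝ) (hs : Convex ℝ s)
    (hy : ∀ t ∈ s, HasDerivAt y (Real.exp (z t) - 1) t)
    (hz : ∀ t ∈ s, HasDerivAt z (ξ + Real.exp (z t) * (α * z t - ξ * y t - ξ)) t) :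
    (∀ t ∈ s, HasDerivAt (fun t => H (y t) (z t))
      (ξ * Real.exp (-ξ * y t) * (Real.exp (z t) - 1) * z t * (α - ξ)) t) ∧
    (∀ w : ℝ, 0 ≤ (Real.exp w - 1) * w) ∧
    (ξ ≤ α → MonotoneOn (fun t => H (y t) (z t)) s) := by
  have hH' : H = lyapunov ξ := funext₂ hH
  subst hH'
  have hderiv : ∀ t ∈ s, HasDerivAt (fun t => lyapunov ξ (y t) (z t))
      (ξ * exp (-ξ * y t) * (exp (z t) - 1) * z t * (α - ξ)) t := fun t ht => by
    rw [← lyapunov_derivative_on_reduced_field]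
    exact hasDerivAt_lyapunov_comp (hy t ht) (hz t ht)
  refine ⟨hderiv, exp_sub_one_mul_self_nonneg, fun hξα => ?_⟩
  refine monotoneOn_of_hasDerivAt_nonneg hs hderiv fun t _ => ?_
  have hpos : 0 ≤ ξ * exp (-ξ * y t) := by positivity
  exact (mul_nonneg (mul_nonneg hpos (exp_sub_one_mul_self_nonneg (z t)))
    (sub_nonneg.2 hξα)).trans_eq (by ring)

/-- Along any solution of the reduced problem `ẏ = e^z − 1`,
`ż = ξ + e^z(αz − ξy − ξ)` on an interval, the function
`H(y,z) = −ξe^{−ξy}(y − z + 1 − e^{−z}) + 1 − e^{−ξy}` satisfies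
`d/dt H(y(t),z(t)) = ξ e^{−ξy}(e^z − 1)z(α − ξ)`; in particular `H` is nondecreasing
along solutions when `α ≥ ξ`, since `(e^z − 1)z ≥ 0` for all `z`. -/
theorem stmt_2 (α ξ : ℝ) (hα : 0 < α) (hξ : 0 < ξ) (H : ℝ → ℝ → ℝ)
    (hH : ∀ y z : ℝ, H y z =
      -ξ * Real.exp (-ξ * y) * (y - z + 1 - Real.exp (-z)) + 1 - Real.exp (-ξ * y))
    (y z : ℝ → ℝ) (s : Set ℝ) (hs : Convex ℝ s)
    (hy : ∀ t ∈ s, HasDerivAt y (Real.exp (z t) - 1) t)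
    (hz : ∀ t ∈ s, HasDerivAt z (ξ + Real.exp (z t) * (α * z t - ξ * y t - ξ)) t) :
    (∀ t ∈ s, HasDerivAt (fun t => H (y t) (z t))
      (ξ * Real.exp (-ξ * y t) * (Real.exp (z t) - 1) * z t * (α - ξ)) t) ∧
    (∀ w : ℝ, 0 ≤ (Real.exp w - 1) * w) ∧
    (ξ ≤ α → MonotoneOn (fun t => H (y t) (z t)) s) :=
  stmt_2_general α ξ hξ H hH y z s hs hy hz
end

section
/- Let α = ξ > 0. There exists a solution (y, z) of the reduced problem ẏ = e^z − 1, ż = ξ + e^z(αz − ξy − ξ), defined on a maximal interval (−∞, t₊), such that y(t) → ∞ and z(t) + log(y(t))·(1 + 1/y(t)) → 0 as t → −∞, and y(t) → ∞ and z(t) − y(t) − (1+ξ)/ξ → 0 as t → t₊. (At α = ξ the manifolds W^{cu}(Q⁶) and W^{cs}(Q³) coincide, producing a connecting orbit with both asymptotics.) -/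
open Filter Topology

/-- `(y,z)` solves the reduced problem `ẏ = e^z − 1`, `ż = ξ + e^z(αz − ξy − ξ)`
on the interval `(−∞, tp)`. -/
def IsSolUpTo (α ξ : ℝ) (y z : ℝ → ℝ) (tp : EReal) : Prop :=
  ∀ t : ℝ, (t : EReal) < tp →
    HasDerivAt y (Real.exp (z t) - 1) t ∧
    HasDerivAt z (ξ + Real.exp (z t) * (α * z t - ξ * y t - ξ)) t

/-- `tp` is the maximal forward time of existence. -/
def IsFwdMaximal (α ξ : ℝ) (y z : ℝ → ℝ) (tp : EReal) : Prop :=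
  ∀ (tp' : EReal) (y' z' : ℝ → ℝ), tp ≤ tp' → IsSolUpTo α ξ y' z' tp' →
    (∀ t : ℝ, (t : EReal) < tp → y' t = y t ∧ z' t = z t) → tp' = tp

/-- The filter of real times `t → tp⁻` (which is `atTop` when `tp = ∞`). -/
noncomputable def fwdFilter (tp : EReal) : Filter ℝ :=
  Filter.comap (fun t : ℝ => (t : EReal)) (nhdsWithin tp (Set.Iio tp))

/-!
At `α = ξ` put `w = z − y − (1 + ξ)/ξ`; the system gives `ẇ = 1 + ξ + ξ w e^z`, so `w = t` is
consistent exactly when `e^z = −1/t`. This yields the explicit orbit `z = −log(−t)`,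
`y = −t − log(−t) − (1 + ξ)/ξ` on `(−∞, 0)`. As `t → 0⁻`, `y` blows up (so `t₊ = 0` is maximal)
while `z − y − (1 + ξ)/ξ = t → 0`; as `t → −∞`, `y ~ −t`, so `z + log y = log (y/(−t)) → 0`
and `log y / y → 0`.
-/

open Real

lemma fwdFilter_coe (a : ℝ) : fwdFilter a = 𝓝[<] a := by
  rw [fwdFilter, nhdsWithin, nhdsWithin, comap_inf, comap_principal,
    ← EReal.isEmbedding_coe.nhds_eq_comap]
  congr 2
  ext t
  simp

lemma isFwdMaximal_of_tendsto_atTop {α ξ a : ℝ} {y z : ℝ → ℝ}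
    (hy : Tendsto y (𝓝[<] a) atTop) : IsFwdMaximal α ξ y z a := by
  intro tp' y' z' hle hsol' hagree
  by_contra hne
  have ha : ((a : ℝ) : EReal) < tp' := lt_of_le_of_ne hle (Ne.symm hne)
  have hy' : Tendsto y' (𝓝[<] a) atTop := by
    refine hy.congr' ?_
    filter_upwards [self_mem_nhdsWithin] with t ht
    exact ((hagree t (EReal.coe_lt_coe_iff.mpr ht)).1).symm
  have hcont : Tendsto y' (𝓝[<] a) (𝓝 (y' a)) :=
    (hsol' a ha).1.continuousAt.continuousWithinAt.tendsto
  exact not_tendsto_nhds_of_tendsto_atTop hy' _ hcont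

lemma tendsto_log_mul_one_add_inv_sub_log {ι : Type*} {l : Filter ι} {u v : ι → ℝ}
    (hv : Tendsto v l atTop) (huv : Tendsto (fun i => u i / v i) l (𝓝 1)) :
    Tendsto (fun i => log (u i) * (1 + 1 / u i) - log (v i)) l (𝓝 0) := by
  have hu : Tendsto u l atTop := hv.num one_pos huv
  have hlog_ratio : Tendsto (fun i => log (u i / v i)) l (𝓝 0) := by
    simpa [Function.comp_def] using (continuousAt_log one_ne_zero).tendsto.comp huv
  have hlog_div : Tendsto (fun i => log (u i) / u i) l (𝓝 0) :=
    isLittleO_log_id_atTop.tendsto_div_nhds_zero.comp hu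
  have hlim : Tendsto (fun i => log (u i / v i) + log (u i) / u i) l (𝓝 0) := by
    simpa using hlog_ratio.add hlog_div
  refine hlim.congr' ?_
  filter_upwards [hu.eventually_gt_atTop 0, hv.eventually_gt_atTop 0] with i hui hvi
  rw [log_div hui.ne' hvi.ne']
  field_simp
  ring

lemma tendsto_sub_log_sub_const_div_self (c : ℝ) :
    Tendsto (fun s => (s - log s - c) / s) atTop (𝓝 1) := by
  have hlog_div : Tendsto (fun s => log s / s) atTop (𝓝 0) :=
    isLittleO_log_id_atTop.tendsto_div_nhds_zero
  have hc_div : Tendsto (fun s => c / s) atTop (𝓝 0) :=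
    tendsto_const_nhds.div_atTop tendsto_id
  have hlim : Tendsto (fun s => 1 - log s / s - c / s) atTop (𝓝 1) := by
    simpa using (tendsto_const_nhds.sub hlog_div).sub hc_div
  refine hlim.congr' ?_
  filter_upwards [eventually_gt_atTop 0] with s hs
  field_simp

noncomputable def connectingOrbitY (ξ : ℝ) (t : ℝ) : ℝ := -t - log (-t) - (1 + ξ) / ξ

noncomputable def connectingOrbitZ (t : ℝ) : ℝ := -log (-t)

lemma connectingOrbitZ_sub_connectingOrbitY (ξ t : ℝ) :
    connectingOrbitZ t - connectingOrbitY ξ t - (1 + ξ) / ξ = t := by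
  rw [connectingOrbitY, connectingOrbitZ]
  ring

lemma isSolUpTo_connectingOrbit {ξ : ℝ} (hξ : ξ ≠ 0) :
    IsSolUpTo ξ ξ (connectingOrbitY ξ) connectingOrbitZ 0 := by
  intro t htE
  have ht : t < 0 := EReal.coe_lt_coe_iff.mp htE
  have ht0 : t ≠ 0 := ht.ne
  have hexp : exp (connectingOrbitZ t) = -t⁻¹ := by
    rw [connectingOrbitZ, exp_neg, exp_log (neg_pos.mpr ht), inv_neg]
  have hlog : HasDerivAt (fun t => log (-t)) (-1 / -t) t :=
    (hasDerivAt_neg t).log (neg_ne_zero.mpr ht0)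
  constructor
  · refine (((hasDerivAt_neg t).sub hlog).sub_const ((1 + ξ) / ξ)).congr_deriv ?_
    rw [hexp]
    field_simp
    ring
  · refine hlog.neg.congr_deriv ?_
    rw [hexp, connectingOrbitY, connectingOrbitZ]
    field_simp
    ring

lemma tendsto_connectingOrbitY_nhdsLT (ξ : ℝ) :
    Tendsto (connectingOrbitY ξ) (𝓝[<] 0) atTop := by
  have hlog : Tendsto (fun t => -log (-t)) (𝓝[<] (0 : ℝ)) atTop := by
    simpa only [log_neg_eq_log, Function.comp_def] using
      tendsto_neg_atBot_atTop.comp tendsto_log_nhdsLT_zero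
  have hrest : Tendsto (fun t : ℝ => -t - (1 + ξ) / ξ) (𝓝[<] 0) (𝓝 (-0 - (1 + ξ) / ξ)) :=
    ((continuous_neg.sub continuous_const).tendsto 0).mono_left nhdsWithin_le_nhds
  refine (hlog.atTop_add hrest).congr fun t => ?_
  simp only [connectingOrbitY]
  ring

lemma tendsto_connectingOrbitY_atBot (ξ : ℝ) :
    Tendsto (fun t => connectingOrbitY ξ t / -t) atBot (𝓝 1) :=
  (tendsto_sub_log_sub_const_div_self _).comp tendsto_neg_atBot_atTop

/-- At `α = ξ` the manifolds `W^{cu}(Q⁶)` and `W^{cs}(Q³)` coincide: there is a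
maximal solution on `(−∞, t₊)` with `y(t) → ∞`, `z(t) + log(y(t))(1 + 1/y(t)) → 0`
as `t → −∞`, and `y(t) → ∞`, `z(t) − y(t) − (1+ξ)/ξ → 0` as `t → t₊`. -/
theorem stmt_8 (ξ : ℝ) (hξ : 0 < ξ) :
    ∃ (tp : EReal) (y z : ℝ → ℝ),
      IsSolUpTo ξ ξ y z tp ∧ IsFwdMaximal ξ ξ y z tp ∧
      Tendsto y atBot atTop ∧
      Tendsto (fun t => z t + Real.log (y t) * (1 + 1 / y t)) atBot (𝓝 0) ∧
      Tendsto y (fwdFilter tp) atTop ∧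
      Tendsto (fun t => z t - y t - (1 + ξ) / ξ) (fwdFilter tp) (𝓝 0) := by
  have hratio := tendsto_connectingOrbitY_atBot ξ
  have hfwd := tendsto_connectingOrbitY_nhdsLT ξ
  refine ⟨((0 : ℝ) : EReal), connectingOrbitY ξ, connectingOrbitZ,
    isSolUpTo_connectingOrbit hξ.ne', isFwdMaximal_of_tendsto_atTop hfwd,
    tendsto_neg_atBot_atTop.num one_pos hratio, ?_, (fwdFilter_coe 0).symm ▸ hfwd, ?_⟩
  · refine (tendsto_log_mul_one_add_inv_sub_log tendsto_neg_atBot_atTop hratio).congr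
      fun t => ?_
    simp only [connectingOrbitZ]
    ring
  · simp_rw [fwdFilter_coe, connectingOrbitZ_sub_connectingOrbitY]
    exact tendsto_nhdsWithin_of_tendsto_nhds tendsto_id
end

section
/- Define χ : ℝ → ℝ by χ(0) = −1 and, for p ≠ 0, χ(p) = −√(√(4p² + 1) − 1)/(√2 · |p|). Then: (i) χ(p)² + χ(p)⁴ p² = 1 for all p ∈ ℝ; (ii) −1 ≤ χ(p) < 0 for all p ∈ ℝ; (iii) χ is infinitely differentiable on all of ℝ; and (iv) for each p ∈ ℝ, χ(p) is the unique negative real number c satisfying c² + c⁴ p² = 1. -/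
/-- The function `χ` parametrizing the negative solution branch of `c² + c⁴p² = 1`. -/
noncomputable def chi (p : ℝ) : ℝ :=
  if p = 0 then -1 else -Real.sqrt (Real.sqrt (4 * p ^ 2 + 1) - 1) / (Real.sqrt 2 * |p|)

lemma s_ge_one (p : ℝ) : 1 ≤ Real.sqrt (4 * p ^ 2 + 1) := by
  calc (1:ℝ) = Real.sqrt 1 := Real.sqrt_one.symm
    _ ≤ _ := Real.sqrt_le_sqrt (by nlinarith [sq_nonneg p])

lemma s_sq (p : ℝ) : Real.sqrt (4 * p ^ 2 + 1) ^ 2 = 4 * p ^ 2 + 1 :=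
  Real.sq_sqrt (by positivity)

lemma chi_eq (p : ℝ) : chi p = -Real.sqrt (2 / (1 + Real.sqrt (4 * p ^ 2 + 1))) := by
  by_cases hp : p = 0
  · simp [chi, hp]
    norm_num
  · have hs := s_ge_one p
    have hsq := s_sq p
    set s := Real.sqrt (4 * p ^ 2 + 1) with hsdef
    have hp2 : (0:ℝ) < p ^ 2 := by positivity
    rw [chi, if_neg hp]
    rw [show Real.sqrt 2 * |p| = Real.sqrt (2 * p ^ 2) by
      rw [Real.sqrt_mul (by norm_num), Real.sqrt_sq_eq_abs]]
    rw [neg_div, ← Real.sqrt_div (by linarith)]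
    congr 2
    rw [div_eq_div_iff (by positivity) (by positivity)]
    nlinarith

lemma chi_sq (p : ℝ) : chi p ^ 2 = 2 / (1 + Real.sqrt (4 * p ^ 2 + 1)) := by
  rw [chi_eq, neg_sq, Real.sq_sqrt (by positivity)]

lemma chi_eqn (p : ℝ) : chi p ^ 2 + chi p ^ 4 * p ^ 2 = 1 := by
  have h2 := chi_sq p
  have hs := s_ge_one p
  have hsq := s_sq p
  set s := Real.sqrt (4 * p ^ 2 + 1)
  have : chi p ^ 4 = (2 / (1 + s)) ^ 2 := by rw [show (4:ℕ) = 2*2 from rfl, pow_mul, h2]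
  rw [h2, this]
  field_simp
  nlinarith

lemma chi_neg (p : ℝ) : chi p < 0 := by
  rw [chi_eq]
  have hs := s_ge_one p
  have : 0 < Real.sqrt (2 / (1 + Real.sqrt (4 * p ^ 2 + 1))) :=
    Real.sqrt_pos.mpr (by positivity)
  linarith

lemma chi_ge (p : ℝ) : -1 ≤ chi p := by
  rw [chi_eq, neg_le_neg_iff]
  have hs := s_ge_one p
  refine Real.sqrt_le_one.mpr ?_
  rw [div_le_one (by linarith)]
  linarith

lemma chi_smooth : ContDiff ℝ (⊤ : ℕ∞) chi := by
  have : chi = fun p => -Real.sqrt (2 / (1 + Real.sqrt (4 * p ^ 2 + 1))) := by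
    funext p; exact chi_eq p
  rw [this]
  rw [contDiff_iff_contDiffAt]
  intro p
  have hs := s_ge_one p
  have h1 : ContDiffAt ℝ (⊤ : ℕ∞) (fun p : ℝ => Real.sqrt (4 * p ^ 2 + 1)) p := by
    apply ContDiffAt.sqrt
    · exact (contDiff_const.mul (contDiff_id.pow 2)).add contDiff_const |>.contDiffAt
    · nlinarith [s_ge_one p, s_sq p]
  have h2 : ContDiffAt ℝ (⊤ : ℕ∞) (fun p : ℝ => 2 / (1 + Real.sqrt (4 * p ^ 2 + 1))) p := by
    apply ContDiffAt.div contDiffAt_const (contDiffAt_const.add h1)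
    positivity
  exact (h2.sqrt (by positivity)).neg

/-- Properties of `χ`: (i) `χ(p)² + χ(p)⁴p² = 1`; (ii) `−1 ≤ χ(p) < 0`;
(iii) `χ` is infinitely differentiable on `ℝ`; (iv) `χ(p)` is the unique negative
solution `c` of `c² + c⁴p² = 1`. -/
theorem stmt_12 :
    (∀ p : ℝ, chi p ^ 2 + chi p ^ 4 * p ^ 2 = 1) ∧
    (∀ p : ℝ, -1 ≤ chi p ∧ chi p < 0) ∧
    (∀ n : ℕ, ContDiff ℝ n chi) ∧
    (∀ p c : ℝ, c < 0 → c ^ 2 + c ^ 4 * p ^ 2 = 1 → c = chi p) := by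
  refine ⟨chi_eqn, fun p => ⟨chi_ge p, chi_neg p⟩, fun n => chi_smooth.of_le (mod_cast le_top), ?_⟩
  intro p c hc heq
  have h1 := chi_eqn p
  have h2 := chi_neg p
  have key : (c ^ 2 - chi p ^ 2) * (1 + p ^ 2 * (c ^ 2 + chi p ^ 2)) = 0 := by
    linear_combination heq - h1
  have hpos : (0:ℝ) < 1 + p ^ 2 * (c ^ 2 + chi p ^ 2) := by positivity
  have hsq : c ^ 2 = chi p ^ 2 := by
    rcases mul_eq_zero.mp key with h | h
    · linarith
    · linarith
  have : c = -Real.sqrt (c ^ 2) := by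
    rw [Real.sqrt_sq_eq_abs, abs_of_neg hc, neg_neg]
  rw [this, hsq, Real.sqrt_sq_eq_abs, abs_of_neg h2, neg_neg]
end

section
/- Let ξ > 0 and α > 0, and consider the planar system ẋ = x·(y + (x+1)/ξ), ẏ = y·(y + (x+1)/ξ) with initial condition x(0) = −1−α, y(0) = 2α/ξ. If 0 < α < 1, then the solution is defined and bounded for all t ≥ 0 and converges, as t → ∞, to the point (x, y) = (−(1+α)/(1−α), 2α/(ξ(1−α))). If α ≥ 1, then y is unbounded on the maximal forward interval of existence; i.e., the orbit is bounded in forward time if and only if α < 1. -/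
/-!
Along any solution `g := y + (x + 1)/ξ` is a common multiplier: `ẋ = g x`, `ẏ = g y`. Hence
`x E` and `y E` are constant for the integrating factor `E := exp (-∫ g)`, and substituting this
back into `Ė = -g E` turns it into the linear equation `ξ Ė = c - E`, `c = -(x₀ + ξ y₀)`.
So `(x, y) = (x₀, y₀) / E` with `E t = c + (1 - c) e^{-t/ξ}` as long as the solution exists,
and conversely this formula solves the system wherever `E ≠ 0`. By maximality the solution lives
exactly as long as `E > 0`: for `c = 1 - α > 0` forever, with limit `(x₀, y₀)/c`, while for
`c ≤ 0` the factor `E` decreases through every value in `(0, 1]` before the solution ends,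
so `y = y₀ / E` is unbounded.
-/

open Filter Topology Set Real

theorem exists_hasDerivAt_eq_of_continuousOn_Icc {g : ℝ → ℝ} {a b : ℝ} (hab : a ≤ b)
    (hg : ContinuousOn g (Icc a b)) :
    ∃ G : ℝ → ℝ, G a = 0 ∧ ∀ t ∈ Icc a b, HasDerivAt G (g t) t := by
  set h : ℝ → ℝ := fun s => g (projIcc a b hab s)
  have hh : Continuous h := hg.comp_continuous (continuous_subtype_val.comp continuous_projIcc)
    fun s => (projIcc a b hab s).2
  refine ⟨fun t => ∫ s in a..t, h s, intervalIntegral.integral_same, fun t ht => ?_⟩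
  have hht : h t = g t := by simp only [h, projIcc_of_mem hab ht]
  exact hht ▸ (hh.integral_hasStrictDerivAt a t).hasDerivAt

theorem mul_exp_neg_eq_of_hasDerivAt {f g G : ℝ → ℝ} {a b : ℝ}
    (hf : ∀ t ∈ Icc a b, HasDerivAt f (f t * g t) t)
    (hG : ∀ t ∈ Icc a b, HasDerivAt G (g t) t) :
    ∀ t ∈ Icc a b, f t * exp (-G t) = f a * exp (-G a) := by
  have hderiv : ∀ t ∈ Icc a b, HasDerivAt (fun s => f s * exp (-G s)) 0 t := fun t ht => by
    refine ((hf t ht).mul (hG t ht).neg.exp).congr_deriv ?_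
    ring
  exact constant_of_has_deriv_right_zero
    (fun t ht => (hderiv t ht).continuousAt.continuousWithinAt)
    (fun t ht => (hderiv t (Ico_subset_Icc_self ht)).hasDerivWithinAt)

namespace ReducedFlow

noncomputable def denom (ξ c t : ℝ) : ℝ := c + (1 - c) * exp (-(t / ξ))

def IsForwardSolution (ξ : ℝ) (b : EReal) (x y : ℝ → ℝ) : Prop :=
  ∀ t : ℝ, 0 ≤ t → (t : EReal) < b →
    HasDerivAt x (x t * (y t + (x t + 1) / ξ)) t ∧ HasDerivAt y (y t * (y t + (x t + 1) / ξ)) t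

def IsInextendible (ξ : ℝ) (b : EReal) (x y : ℝ → ℝ) : Prop :=
  ∀ b' : EReal, b < b' → ¬ ∃ x' y' : ℝ → ℝ, IsForwardSolution ξ b' x' y' ∧
    ∀ t : ℝ, 0 ≤ t → (t : EReal) < b → x' t = x t ∧ y' t = y t

section denom

variable {ξ c : ℝ}

@[simp]
theorem denom_zero : denom ξ c 0 = 1 := by simp [denom]

theorem hasDerivAt_denom (hξ : ξ ≠ 0) (t : ℝ) :
    HasDerivAt (denom ξ c) ((c - denom ξ c t) / ξ) t := by
  have h := ((((hasDerivAt_id t).div_const ξ).neg.exp).const_mul (1 - c)).const_add c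
  refine h.congr_deriv ?_
  simp only [denom, Pi.neg_apply, id]
  field_simp
  ring

theorem denom_strictAnti (hξ : 0 < ξ) (hc : c < 1) : StrictAnti (denom ξ c) := fun s t hst => by
  have : exp (-(t / ξ)) < exp (-(s / ξ)) := by gcongr
  unfold denom
  nlinarith

theorem min_le_denom (hξ : 0 < ξ) {t : ℝ} (ht : 0 ≤ t) : min c 1 ≤ denom ξ c t := by
  have he0 : 0 < exp (-(t / ξ)) := exp_pos _
  have he1 : exp (-(t / ξ)) ≤ 1 := exp_le_one_iff.mpr (by simp only [neg_nonpos]; positivity)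
  unfold denom
  rcases le_total c 1 with hc | hc
  · nlinarith [min_le_left c 1]
  · nlinarith [min_le_right c 1]

theorem denom_neg_mul_log (hξ : ξ ≠ 0) {q : ℝ} (hcq : c < q) (hc : c < 1) :
    denom ξ c (-(ξ * log ((q - c) / (1 - c)))) = q := by
  have hexp : exp (-(-(ξ * log ((q - c) / (1 - c))) / ξ)) = (q - c) / (1 - c) := by
    rw [show -(-(ξ * log ((q - c) / (1 - c))) / ξ) = log ((q - c) / (1 - c)) by field_simp]
    exact exp_log (div_pos (by linarith) (by linarith))
  have hc1 : 1 - c ≠ 0 := by linarith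
  rw [denom, hexp]
  field_simp
  ring

theorem tendsto_denom (hξ : 0 < ξ) : Tendsto (denom ξ c) atTop (𝓝 c) := by
  have hexp : Tendsto (fun t => exp (-(t / ξ))) atTop (𝓝 0) :=
    tendsto_exp_atBot.comp (tendsto_neg_atTop_atBot.comp (tendsto_id.atTop_div_const hξ))
  show Tendsto (fun t => c + (1 - c) * exp (-(t / ξ))) atTop (𝓝 c)
  simpa using (hexp.const_mul (1 - c)).const_add c

end denom

section solution

variable {ξ c : ℝ} {b : EReal} {x y : ℝ → ℝ}

theorem isForwardSolution_div_denom (hξ : ξ ≠ 0) {x₀ y₀ : ℝ} (hc : c = -(x₀ + ξ * y₀))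
    (hpos : ∀ t : ℝ, 0 ≤ t → (t : EReal) < b → denom ξ c t ≠ 0) :
    IsForwardSolution ξ b (fun t => x₀ / denom ξ c t) (fun t => y₀ / denom ξ c t) := by
  intro t ht htb
  have hD := hpos t ht htb
  have key : ∀ k : ℝ, HasDerivAt (fun s => k / denom ξ c s)
      (k / denom ξ c t * (y₀ / denom ξ c t + (x₀ / denom ξ c t + 1) / ξ)) t := fun k => by
    refine ((hasDerivAt_const t k).div (hasDerivAt_denom hξ t) hD).congr_deriv ?_
    field_simp
    linear_combination (-k) * hc
  exact ⟨key x₀, key y₀⟩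

theorem eq_div_denom_of_isForwardSolution (hξ : ξ ≠ 0) (hsol : IsForwardSolution ξ b x y)
    (hc : c = -(x 0 + ξ * y 0)) {T : ℝ} (hT0 : 0 ≤ T) (hTb : (T : EReal) < b) :
    0 < denom ξ c T ∧ x T = x 0 / denom ξ c T ∧ y T = y 0 / denom ξ c T := by
  have hsolT : ∀ t ∈ Icc 0 T, _ := fun t ht =>
    hsol t ht.1 ((EReal.coe_le_coe_iff.mpr ht.2).trans_lt hTb)
  set g : ℝ → ℝ := fun t => y t + (x t + 1) / ξ
  have hg : ContinuousOn g (Icc 0 T) := fun t ht =>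
    ((hsolT t ht).2.continuousAt.add
      (((hsolT t ht).1.continuousAt.add continuousAt_const).div_const ξ)).continuousWithinAt
  obtain ⟨G, hG0, hG⟩ := exists_hasDerivAt_eq_of_continuousOn_Icc hT0 hg
  have hxE : ∀ t ∈ Icc 0 T, x t * exp (-G t) = x 0 := fun t ht => by
    simpa [hG0] using mul_exp_neg_eq_of_hasDerivAt (fun s hs => (hsolT s hs).1) hG t ht
  have hyE : ∀ t ∈ Icc 0 T, y t * exp (-G t) = y 0 := fun t ht => by
    simpa [hG0] using mul_exp_neg_eq_of_hasDerivAt (fun s hs => (hsolT s hs).2) hG t ht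
  -- `E := exp (-G)` and `denom ξ c` solve the same linear equation `ξ Ė = c - E`, `E 0 = 1`.
  have hdiff : ∀ t ∈ Icc 0 T, HasDerivAt (fun s => exp (-G s) - denom ξ c s)
      ((exp (-G t) - denom ξ c t) * (-1 / ξ)) t := fun t ht => by
    refine ((hG t ht).neg.exp.sub (hasDerivAt_denom (c := c) hξ t)).congr_deriv ?_
    have h1 := hxE t ht
    have h2 := hyE t ht
    simp only [g, Pi.neg_apply]
    field_simp
    linear_combination (-ξ) * h2 - h1 - hc
  have hET := mul_exp_neg_eq_of_hasDerivAt hdiff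
    (fun t _ => by simpa using (hasDerivAt_id t).mul_const (-1 / ξ)) T ⟨hT0, le_rfl⟩
  have hE : exp (-G T) = denom ξ c T := by
    simpa [hG0, sub_eq_zero, (exp_pos _).ne'] using hET
  have hmem : T ∈ Icc 0 T := ⟨hT0, le_rfl⟩
  refine ⟨hE ▸ exp_pos _, ?_, ?_⟩
  · rw [eq_div_iff (hE ▸ (exp_pos _).ne'), ← hE, hxE T hmem]
  · rw [eq_div_iff (hE ▸ (exp_pos _).ne'), ← hE, hyE T hmem]

theorem le_of_forall_denom_pos (hξ : ξ ≠ 0) (hsol : IsForwardSolution ξ b x y)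
    (hmax : IsInextendible ξ b x y) (hc : c = -(x 0 + ξ * y 0)) {b' : EReal}
    (hpos : ∀ t : ℝ, 0 ≤ t → (t : EReal) < b' → 0 < denom ξ c t) : b' ≤ b := by
  by_contra! hbb'
  refine hmax b' hbb' ⟨_, _, isForwardSolution_div_denom hξ hc fun t ht htb => (hpos t ht htb).ne',
    fun t ht htb => ?_⟩
  obtain ⟨-, hx, hy⟩ := eq_div_denom_of_isForwardSolution hξ hsol hc ht htb
  exact ⟨hx.symm, hy.symm⟩

theorem global_of_denom_limit_pos (hξ : 0 < ξ) (hsol : IsForwardSolution ξ b x y)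
    (hmax : IsInextendible ξ b x y) (hc : c = -(x 0 + ξ * y 0)) (hc0 : 0 < c) :
    b = ⊤ ∧ (∃ C : ℝ, ∀ t : ℝ, 0 ≤ t → |x t| ≤ C ∧ |y t| ≤ C) ∧
      Tendsto (fun t => (x t, y t)) atTop (𝓝 (x 0 / c, y 0 / c)) := by
  have hm : 0 < min c 1 := lt_min hc0 one_pos
  have hpos : ∀ t : ℝ, 0 ≤ t → 0 < denom ξ c t := fun t ht => hm.trans_le (min_le_denom hξ ht)
  have htop : b = ⊤ := top_le_iff.mp <|
    le_of_forall_denom_pos hξ.ne' hsol hmax hc fun t ht _ => hpos t ht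
  have hformula : ∀ t : ℝ, 0 ≤ t → x t = x 0 / denom ξ c t ∧ y t = y 0 / denom ξ c t :=
    fun t ht => (eq_div_denom_of_isForwardSolution hξ.ne' hsol hc ht (htop ▸ EReal.coe_lt_top t)).2
  have hbound : ∀ k : ℝ, ∀ t : ℝ, 0 ≤ t → |k / denom ξ c t| ≤ |k| / min c 1 := fun k t ht => by
    rw [abs_div, abs_of_pos (hpos t ht)]
    exact div_le_div_of_nonneg_left (abs_nonneg k) hm (min_le_denom hξ ht)
  refine ⟨htop, ⟨|x 0| / min c 1 + |y 0| / min c 1, fun t ht => ?_⟩, ?_⟩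
  · have hx := hbound (x 0) t ht
    have hy := hbound (y 0) t ht
    rw [← (hformula t ht).1] at hx
    rw [← (hformula t ht).2] at hy
    constructor <;>
      linarith [div_nonneg (abs_nonneg (x 0)) hm.le, div_nonneg (abs_nonneg (y 0)) hm.le]
  · have hD := tendsto_denom (c := c) hξ
    refine ((tendsto_const_nhds.div hD hc0.ne').prodMk_nhds
      (tendsto_const_nhds.div hD hc0.ne')).congr' ?_
    filter_upwards [eventually_ge_atTop 0] with t ht
    rw [(hformula t ht).1, (hformula t ht).2]
    rfl

theorem not_bddAbove_of_denom_limit_nonpos (hξ : 0 < ξ) (hsol : IsForwardSolution ξ b x y)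
    (hmax : IsInextendible ξ b x y) (hc : c = -(x 0 + ξ * y 0)) (hc0 : c ≤ 0) (hy0 : 0 < y 0) :
    ¬ ∃ C : ℝ, ∀ t : ℝ, 0 ≤ t → (t : EReal) < b → y t ≤ C := by
  rintro ⟨C, hC⟩
  set q := y 0 / (|C| + y 0)
  have hq0 : 0 < q := by positivity
  have hq1 : q ≤ 1 := div_le_one_of_le₀ (by linarith [abs_nonneg C]) (by positivity)
  have hanti := denom_strictAnti hξ (hc0.trans_lt one_pos)
  set τ : ℝ → ℝ := fun p => -(ξ * log ((p - c) / (1 - c)))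
  have hτ : ∀ p, 0 < p → denom ξ c (τ p) = p := fun p hp =>
    denom_neg_mul_log hξ.ne' (by linarith) (by linarith)
  have hτ0 : 0 ≤ τ q := hanti.le_iff_ge.mp (by rw [hτ q hq0, denom_zero]; exact hq1)
  have hττ : τ q < τ (q / 2) := hanti.lt_iff_gt.mp (by rw [hτ q hq0, hτ _ (half_pos hq0)]; linarith)
  have hτb : (τ (q / 2) : EReal) ≤ b := le_of_forall_denom_pos hξ.ne' hsol hmax hc fun t _ htb =>
    (half_pos hq0).trans_le (hτ _ (half_pos hq0) ▸ (hanti (EReal.coe_lt_coe_iff.mp htb)).le)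
  have hτb' : (τ q : EReal) < b := (EReal.coe_lt_coe_iff.mpr hττ).trans_le hτb
  obtain ⟨-, -, hy⟩ := eq_div_denom_of_isForwardSolution hξ.ne' hsol hc hτ0 hτb'
  have hyq : y (τ q) = |C| + y 0 := by
    rw [hy, hτ q hq0]
    simp only [q]
    field_simp
  linarith [hC (τ q) hτ0 hτb', le_abs_self C]

end solution

end ReducedFlow

theorem stmt_16_general (ξ α : ℝ) (hξ : 0 < ξ) (hα : 0 < α)
    (b : EReal) (x y : ℝ → ℝ)
    (hsol : ∀ t : ℝ, 0 ≤ t → (t : EReal) < b →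
      HasDerivAt x (x t * (y t + (x t + 1) / ξ)) t ∧
      HasDerivAt y (y t * (y t + (x t + 1) / ξ)) t)
    (hx0 : x 0 = -1 - α) (hy0 : y 0 = 2 * α / ξ)
    (hmax : ∀ b' : EReal, b < b' →
      ¬ ∃ x' y' : ℝ → ℝ,
        (∀ t : ℝ, 0 ≤ t → (t : EReal) < b' →
          HasDerivAt x' (x' t * (y' t + (x' t + 1) / ξ)) t ∧
          HasDerivAt y' (y' t * (y' t + (x' t + 1) / ξ)) t) ∧
        (∀ t : ℝ, 0 ≤ t → (t : EReal) < b → x' t = x t ∧ y' t = y t)) :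
    (α < 1 → b = ⊤ ∧
      (∃ C : ℝ, ∀ t : ℝ, 0 ≤ t → |x t| ≤ C ∧ |y t| ≤ C) ∧
      Tendsto (fun t => (x t, y t)) atTop
        (𝓝 ((-(1 + α) / (1 - α), 2 * α / (ξ * (1 - α))) : ℝ × ℝ))) ∧
    (1 ≤ α → ¬ ∃ C : ℝ, ∀ t : ℝ, 0 ≤ t → (t : EReal) < b → y t ≤ C) := by
  have hc : 1 - α = -(x 0 + ξ * y 0) := by
    rw [hx0, hy0]
    field_simp
    ring
  refine ⟨fun hα1 => ?_, fun hα1 => ReducedFlow.not_bddAbove_of_denom_limit_nonpos hξ hsol hmax hc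
    (by linarith) (hy0 ▸ by positivity)⟩
  obtain ⟨htop, hbdd, hlim⟩ := ReducedFlow.global_of_denom_limit_pos hξ hsol hmax hc (by linarith)
  refine ⟨htop, hbdd, ?_⟩
  convert hlim using 3
  · rw [hx0]
    ring
  · rw [hy0, div_div]

/-- For the planar system `ẋ = x(y + (x+1)/ξ)`, `ẏ = y(y + (x+1)/ξ)` with initial
condition `(x,y)(0) = (−1−α, 2α/ξ)`, if `0 < α < 1` the (maximal forward) solution is
global and bounded and converges to `(−(1+α)/(1−α), 2α/(ξ(1−α)))`, while if `α ≥ 1`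
then `y` is unbounded on the maximal forward interval of existence. -/
theorem stmt_16 (ξ α : ℝ) (hξ : 0 < ξ) (hα : 0 < α)
    (b : EReal) (hb : 0 < b) (x y : ℝ → ℝ)
    (hsol : ∀ t : ℝ, 0 ≤ t → (t : EReal) < b →
      HasDerivAt x (x t * (y t + (x t + 1) / ξ)) t ∧
      HasDerivAt y (y t * (y t + (x t + 1) / ξ)) t)
    (hx0 : x 0 = -1 - α) (hy0 : y 0 = 2 * α / ξ)
    (hmax : ∀ b' : EReal, b < b' →
      ¬ ∃ x' y' : ℝ → ℝ,
        (∀ t : ℝ, 0 ≤ t → (t : EReal) < b' →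
          HasDerivAt x' (x' t * (y' t + (x' t + 1) / ξ)) t ∧
          HasDerivAt y' (y' t * (y' t + (x' t + 1) / ξ)) t) ∧
        (∀ t : ℝ, 0 ≤ t → (t : EReal) < b → x' t = x t ∧ y' t = y t)) :
    (α < 1 → b = ⊤ ∧
      (∃ C : ℝ, ∀ t : ℝ, 0 ≤ t → |x t| ≤ C ∧ |y t| ≤ C) ∧
      Tendsto (fun t => (x t, y t)) atTop
        (𝓝 ((-(1 + α) / (1 - α), 2 * α / (ξ * (1 - α))) : ℝ × ℝ))) ∧
    (1 ≤ α → ¬ ∃ C : ℝ, ∀ t : ℝ, 0 ≤ t → (t : EReal) < b → y t ≤ C) :=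
  stmt_16_general ξ α hξ hα b x y hsol hx0 hy0 hmax
end
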